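/- arXiv:1606.01733 — 2 statements merged into one kernel-verified Lean document; each statement's English description precedes it below -/
import Mathlib

section
/- The 4×4 real matrix D with rows (δ,0,γ,γ), (0,δ,γ,γ), (γ,γ,δ,0), (γ,γ,0,δ) is positive semi-definite whenever |γ| ≤ δ/2 and δ ≥ 0. -/
/-! By Gershgorin's circle theorem every eigenvalue of a Hermitian matrix lies within the off-diagonal
absolute row sum of some diagonal entry; each row of `D` has diagonal `δ` and off-diagonal sum
`2 |γ| ≤ δ`, so no eigenvalue is negative. -/

open Finset

open scoped ComplexOrder in
theorem Matrix.IsHermitian.posSemidef_of_sum_norm_offDiag_le {𝕜 n : Type*} [RCLike 𝕜] [Fintype n]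
    [DecidableEq n] {A : Matrix n n 𝕜} (hA : A.IsHermitian)
    (hdom : ∀ i, ∑ j ∈ univ.erase i, ‖A i j‖ ≤ RCLike.re (A i i)) : A.PosSemidef := by
  rw [hA.posSemidef_iff_eigenvalues_nonneg]
  intro i
  set μ := hA.eigenvalues i
  have hμ : Module.End.HasEigenvalue (Matrix.toLin' A) (μ : 𝕜) := by
    rw [Module.End.hasEigenvalue_iff_mem_spectrum, Matrix.spectrum_toLin',
      ← RCLike.algebraMap_eq_ofReal, spectrum.algebraMap_mem_iff]
    exact hA.eigenvalues_mem_spectrum_real i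
  obtain ⟨k, hk⟩ := eigenvalue_mem_ball hμ
  rw [Metric.mem_closedBall, dist_comm, dist_eq_norm] at hk
  have hre : RCLike.re (A k k) - μ ≤ ‖A k k - μ‖ := by
    simpa using RCLike.re_le_norm (A k k - μ)
  simpa using! (hre.trans hk).trans (hdom k)

theorem kossakowski_model1_posSemidef_general (δ γ : ℝ) (hγ : |γ| ≤ δ / 2) :
    (Matrix.of ![![δ, 0, γ, γ], ![0, δ, γ, γ], ![γ, γ, δ, 0], ![γ, γ, 0, δ]] :
      Matrix (Fin 4) (Fin 4) ℝ).PosSemidef := by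
  apply Matrix.IsHermitian.posSemidef_of_sum_norm_offDiag_le
  · ext i j
    fin_cases i <;> fin_cases j <;> rfl
  · intro i
    fin_cases i <;> simp [sum_erase_eq_sub, Fin.sum_univ_four] <;> linarith

theorem kossakowski_model1_posSemidef (δ γ : ℝ) (hδ : 0 ≤ δ) (hγ : |γ| ≤ δ / 2) :
    (Matrix.of ![![δ, 0, γ, γ], ![0, δ, γ, γ], ![γ, γ, δ, 0], ![γ, γ, 0, δ]] :
      Matrix (Fin 4) (Fin 4) ℝ).PosSemidef :=
  kossakowski_model1_posSemidef_general δ γ hγ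
end

section
/- Define S₀(t) = sinh⁴(r)(e^{−8t} − 2e^{−6t}cosh(2γt) + e^{−4t}) − e^{−4t}sinh²(2γt)sinh²(r) for real r, γ, t. Then S₀(0) = 0, dS₀/dt(0) = 0, and d²S₀/dt²(0) = 8(sinh⁴(r)(1−γ²) − sinh²(r)γ²). Consequently, if sinh²(r) < γ²/(1−γ²) (with 0 < γ < 1 and r ≠ 0) then S₀(t) < 0 for all sufficiently small t > 0. -/
open Real Filter

/-- The zero-temperature separability function of Model 1. -/
noncomputable def S0 (r γ t : ℝ) : ℝ :=
  Real.sinh r ^ 4 * (Real.exp (-8 * t) - 2 * Real.exp (-6 * t) * Real.cosh (2 * γ * t)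
      + Real.exp (-4 * t))
    - Real.exp (-4 * t) * Real.sinh (2 * γ * t) ^ 2 * Real.sinh r ^ 2

private lemma hd6 (a1 a2 a3 a4 a5 a6 c1 c2 c3 c4 c5 c6 x : ℝ) :
    HasDerivAt (fun t => a1 * Real.exp (c1*t) + a2 * Real.exp (c2*t) + a3 * Real.exp (c3*t)
      + a4 * Real.exp (c4*t) + a5 * Real.exp (c5*t) + a6 * Real.exp (c6*t))
      (a1*c1 * Real.exp (c1*x) + a2*c2 * Real.exp (c2*x) + a3*c3 * Real.exp (c3*x)
      + a4*c4 * Real.exp (c4*x) + a5*c5 * Real.exp (c5*x) + a6*c6 * Real.exp (c6*x)) x := by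
  have h : ∀ a c : ℝ, HasDerivAt (fun t => a * Real.exp (c*t)) (a*c*Real.exp (c*x)) x := by
    intro a c
    have := (((hasDerivAt_id x).const_mul c).exp).const_mul a
    simpa [mul_comm, mul_assoc, mul_left_comm] using this
  exact ((((h a1 c1).add (h a2 c2)).add (h a3 c3)).add (h a4 c4)).add (h a5 c5) |>.add (h a6 c6)

private lemma S0_flat (r γ : ℝ) : S0 r γ = fun t =>
    (Real.sinh r ^ 4) * Real.exp ((-8)*t) + (-(Real.sinh r ^ 4)) * Real.exp ((2*γ-6)*t)
    + (-(Real.sinh r ^ 4)) * Real.exp ((-2*γ-6)*t)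
    + (Real.sinh r ^ 4 + Real.sinh r ^ 2 / 2) * Real.exp ((-4)*t)
    + (-(Real.sinh r ^ 2 / 4)) * Real.exp ((4*γ-4)*t)
    + (-(Real.sinh r ^ 2 / 4)) * Real.exp ((-4*γ-4)*t) := by
  funext t
  have h1 : Real.exp ((2*γ-6)*t) = Real.exp (2*γ*t) * Real.exp (-6*t) := by
    rw [← Real.exp_add]; ring_nf
  have h2 : Real.exp ((-2*γ-6)*t) = Real.exp (-(2*γ*t)) * Real.exp (-6*t) := by
    rw [← Real.exp_add]; ring_nf
  have h3 : Real.exp ((4*γ-4)*t) = Real.exp (2*γ*t) * Real.exp (2*γ*t) * Real.exp (-4*t) := by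
    rw [← Real.exp_add, ← Real.exp_add]; ring_nf
  have h4 : Real.exp ((-4*γ-4)*t) = Real.exp (-(2*γ*t)) * Real.exp (-(2*γ*t)) * Real.exp (-4*t) := by
    rw [← Real.exp_add, ← Real.exp_add]; ring_nf
  have h5 : Real.exp ((-8)*t) = Real.exp (-8*t) := by norm_num
  have h6 : Real.exp ((-4)*t) = Real.exp (-4*t) := by norm_num
  rw [S0, h1, h2, h3, h4, h5, h6, Real.cosh_eq, Real.sinh_eq (2*γ*t), Real.exp_neg]
  have hy := Real.exp_ne_zero (2*γ*t)
  field_simp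
  ring

private lemma deriv_S0 (r γ : ℝ) : deriv (S0 r γ) = fun x =>
    (Real.sinh r ^ 4)*(-8) * Real.exp ((-8)*x) + (-(Real.sinh r ^ 4))*(2*γ-6) * Real.exp ((2*γ-6)*x)
    + (-(Real.sinh r ^ 4))*(-2*γ-6) * Real.exp ((-2*γ-6)*x)
    + (Real.sinh r ^ 4 + Real.sinh r ^ 2 / 2)*(-4) * Real.exp ((-4)*x)
    + (-(Real.sinh r ^ 2 / 4))*(4*γ-4) * Real.exp ((4*γ-4)*x)
    + (-(Real.sinh r ^ 2 / 4))*(-4*γ-4) * Real.exp ((-4*γ-4)*x) := by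
  funext x
  rw [S0_flat]
  exact (hd6 _ _ _ _ _ _ _ _ _ _ _ _ x).deriv

private lemma deriv2_S0 (r γ : ℝ) : deriv (deriv (S0 r γ)) = fun x =>
    (Real.sinh r ^ 4)*(-8)*(-8) * Real.exp ((-8)*x)
    + (-(Real.sinh r ^ 4))*(2*γ-6)*(2*γ-6) * Real.exp ((2*γ-6)*x)
    + (-(Real.sinh r ^ 4))*(-2*γ-6)*(-2*γ-6) * Real.exp ((-2*γ-6)*x)
    + (Real.sinh r ^ 4 + Real.sinh r ^ 2 / 2)*(-4)*(-4) * Real.exp ((-4)*x)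
    + (-(Real.sinh r ^ 2 / 4))*(4*γ-4)*(4*γ-4) * Real.exp ((4*γ-4)*x)
    + (-(Real.sinh r ^ 2 / 4))*(-4*γ-4)*(-4*γ-4) * Real.exp ((-4*γ-4)*x) := by
  funext x
  rw [deriv_S0]
  exact (hd6 _ _ _ _ _ _ _ _ _ _ _ _ x).deriv

private lemma S0_factor (r γ t : ℝ) : S0 r γ t =
    Real.exp (-4*t) * Real.sinh r ^ 2 *
      (Real.sinh r ^ 2 * ((1 - Real.exp (-(2*(1-γ)*t))) * (1 - Real.exp (-(2*(1+γ)*t))))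
        - Real.sinh (2*γ*t) ^ 2) := by
  have h1 : Real.exp (-(2*(1-γ)*t)) = Real.exp (2*γ*t) * Real.exp (-2*t) := by
    rw [← Real.exp_add]; ring_nf
  have h2 : Real.exp (-(2*(1+γ)*t)) = Real.exp (-(2*γ*t)) * Real.exp (-2*t) := by
    rw [← Real.exp_add]; ring_nf
  have h8 : Real.exp (-8*t) = Real.exp (-2*t)^4 := by
    rw [← Real.exp_nat_mul]; ring_nf
  have h6 : Real.exp (-6*t) = Real.exp (-2*t)^3 := by
    rw [← Real.exp_nat_mul]; ring_nf
  have h4 : Real.exp (-4*t) = Real.exp (-2*t)^2 := by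
    rw [← Real.exp_nat_mul]; ring_nf
  rw [S0, h1, h2, h8, h6, h4, Real.cosh_eq, Real.sinh_eq (2*γ*t), Real.exp_neg]
  have hy := Real.exp_ne_zero (2*γ*t)
  field_simp
  ring

theorem sudden_birth_zero_temperature (r γ : ℝ) :
    S0 r γ 0 = 0
    ∧ deriv (S0 r γ) 0 = 0
    ∧ deriv (deriv (S0 r γ)) 0
        = 8 * (Real.sinh r ^ 4 * (1 - γ ^ 2) - Real.sinh r ^ 2 * γ ^ 2)
    ∧ (0 < γ → γ < 1 → r ≠ 0 → Real.sinh r ^ 2 < γ ^ 2 / (1 - γ ^ 2) →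
        ∀ᶠ t in nhdsWithin 0 (Set.Ioi 0), S0 r γ t < 0) := by
  refine ⟨?_, ?_, ?_, ?_⟩
  · simp [S0]; norm_num
  · rw [deriv_S0]; simp [Real.exp_zero]; ring
  · rw [deriv2_S0]; simp [Real.exp_zero]; ring
  · intro hγ0 hγ1 hr hs
    filter_upwards [self_mem_nhdsWithin] with t (ht : 0 < t)
    rw [S0_factor]
    have hpos : 0 < Real.exp (-4*t) * Real.sinh r ^ 2 := by
      have : Real.sinh r ≠ 0 := fun h => hr (Real.sinh_eq_zero.mp h)
      positivity
    have h1γ : (0:ℝ) < 1 - γ^2 := by nlinarith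
    have hsγ : Real.sinh r ^ 2 * (1 - γ^2) < γ^2 := (lt_div_iff₀ h1γ).mp hs
    -- bound 1 - exp(-x) ≤ x
    have hb : ∀ x : ℝ, 1 - Real.exp (-x) ≤ x := by
      intro x; have := Real.add_one_le_exp (-x); linarith
    have hb1 := hb (2*(1-γ)*t)
    have hb2 := hb (2*(1+γ)*t)
    have hp1 : 0 < 1 - Real.exp (-(2*(1-γ)*t)) := by
      have : Real.exp (-(2*(1-γ)*t)) < 1 := Real.exp_lt_one_iff.mpr (by nlinarith)
      linarith
    have hp2 : 0 < 1 - Real.exp (-(2*(1+γ)*t)) := by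
      have : Real.exp (-(2*(1+γ)*t)) < 1 := Real.exp_lt_one_iff.mpr (by nlinarith)
      linarith
    have hsinh : 2*γ*t < Real.sinh (2*γ*t) := Real.self_lt_sinh_iff.mpr (by positivity)
    have hspos : 0 < Real.sinh r ^ 2 := pow_two_pos_of_ne_zero (fun h => hr (Real.sinh_eq_zero.mp h))
    have key : Real.sinh r ^ 2 * ((1 - Real.exp (-(2*(1-γ)*t))) * (1 - Real.exp (-(2*(1+γ)*t))))
        - Real.sinh (2*γ*t) ^ 2 < 0 := by
      have h1 : (1 - Real.exp (-(2*(1-γ)*t))) * (1 - Real.exp (-(2*(1+γ)*t)))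
          ≤ (2*(1-γ)*t) * (2*(1+γ)*t) := by
        apply mul_le_mul hb1 hb2 (le_of_lt hp2) (by nlinarith)
      have h2 : Real.sinh r ^ 2 * ((1 - Real.exp (-(2*(1-γ)*t))) * (1 - Real.exp (-(2*(1+γ)*t))))
          ≤ Real.sinh r ^ 2 * ((2*(1-γ)*t) * (2*(1+γ)*t)) :=
        mul_le_mul_of_nonneg_left h1 (le_of_lt hspos)
      have h3 : Real.sinh r ^ 2 * ((2*(1-γ)*t) * (2*(1+γ)*t)) < (2*γ*t)^2 := by nlinarith [mul_lt_mul_of_pos_right hsγ (mul_pos ht ht)]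
      have h4 : (2*γ*t)^2 < Real.sinh (2*γ*t) ^ 2 :=
        pow_lt_pow_left₀ hsinh (by positivity) (by norm_num)
      linarith
    exact mul_neg_of_pos_of_neg hpos key
end
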